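/- arXiv:1909.06210 — 4 statements merged into one kernel-verified Lean document; each statement's English description precedes it below -/
import Mathlib

section
/- If h is a Hermitian N×N matrix with eigenvalues h₁,...,h_N and orthonormal eigenvectors ψ₁,...,ψ_N, then for any unitary U₀ the Cayley path satisfies U₀·f(θh) = q(θ)⁻¹ · Σ_α p_α(θ) · U₀|ψ_α⟩⟨ψ_α|, where q(θ) = Π_α (1 - iθh_α) and p_α(θ) = (1 + iθh_α)·Π_{β≠α}(1 - iθh_β); in particular every entry of U₀·f(θh) is a rational function of θ whose numerator and denominator are polynomials of degree at most N. -/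
/-!
Diagonalise: with `P α = |ψ_α⟩⟨ψ_α|`, orthonormality makes the `P α` orthogonal idempotents summing
to `1`, so `a ↦ ∑ α, a α • P α` is a ring homomorphism from functions on the index set to matrices.
Hence `1 ± iθh` correspond to the functions `1 ± iθ h_α`, the inverse of `1 - iθh` to their
reciprocals, and `f(θh)` to `(1 + iθ h_α) / (1 - iθ h_α)`; clearing the denominators against
`q(θ)` gives the numerators `p_α(θ)`.
-/

open Matrix Finset

namespace Matrix

variable {n R : Type*} [Fintype n] [CommRing R]

def Biorthogonal [DecidableEq n] (u v : n → n → R) : Prop :=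
  ∀ α β, u α ⬝ᵥ v β = if α = β then 1 else 0

def spectralSum (v u : n → n → R) (a : n → R) : Matrix n n R :=
  ∑ α, a α • vecMulVec (v α) (u α)

/-- Completeness from orthonormality: a one-sided inverse of a square matrix is two-sided. -/
theorem Biorthogonal.sum_vecMulVec_eq_one [DecidableEq n] {u v : n → n → R}
    (huv : Biorthogonal u v) : ∑ α, vecMulVec (v α) (u α) = 1 := by
  have hUV : of u * (of v)ᵀ = 1 := by
    ext α β
    simpa [mul_apply, dotProduct, one_apply] using huv α β
  ext i j
  convert congrArg (fun M => M i j) (mul_eq_one_comm.mp hUV) using 1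
  simp [sum_apply, mul_apply, vecMulVec_apply]

theorem spectralSum_one [DecidableEq n] {u v : n → n → R} (huv : Biorthogonal u v) :
    spectralSum v u 1 = 1 := by
  simpa [spectralSum] using huv.sum_vecMulVec_eq_one

theorem spectralSum_add (v u : n → n → R) (a b : n → R) :
    spectralSum v u (a + b) = spectralSum v u a + spectralSum v u b := by
  simp only [spectralSum, Pi.add_apply, add_smul, sum_add_distrib]

theorem spectralSum_sub (v u : n → n → R) (a b : n → R) :
    spectralSum v u (a - b) = spectralSum v u a - spectralSum v u b := by
  simp only [spectralSum, Pi.sub_apply, sub_smul, sum_sub_distrib]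

theorem spectralSum_mul [DecidableEq n] {u v : n → n → R} (huv : Biorthogonal u v)
    (a b : n → R) :
    spectralSum v u a * spectralSum v u b = spectralSum v u (a * b) := by
  have hP : ∀ α β, vecMulVec (v α) (u α) * vecMulVec (v β) (u β) =
      if α = β then vecMulVec (v α) (u α) else 0 := by
    intro α β
    rw [vecMulVec_mul_vecMulVec, huv α β]
    split_ifs with hαβ
    · subst hαβ; rw [one_smul]
    · rw [zero_smul, vecMulVec_zero]
  simp only [spectralSum, sum_mul, mul_sum, smul_mul_smul_comm, hP, smul_ite, smul_zero,
    sum_ite_eq', mem_univ, if_true, Pi.mul_apply]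

theorem inv_spectralSum [DecidableEq n] {K : Type*} [Field K] {u v : n → n → K}
    (huv : Biorthogonal u v) {a : n → K} (ha : ∀ α, a α ≠ 0) :
    (spectralSum v u a)⁻¹ = spectralSum v u a⁻¹ := by
  refine inv_eq_right_inv ?_
  rw [spectralSum_mul huv, ← spectralSum_one huv]
  congr 1
  ext α
  exact mul_inv_cancel₀ (ha α)

theorem cayley_spectralSum [DecidableEq n] {K : Type*} [Field K] {u v : n → n → K}
    (huv : Biorthogonal u v) {a : n → K} (ha : ∀ α, 1 - a α ≠ 0) :
    (1 + spectralSum v u a) * (1 - spectralSum v u a)⁻¹ =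
      spectralSum v u fun α => (1 + a α) / (1 - a α) := by
  rw [← spectralSum_one huv, ← spectralSum_add, ← spectralSum_sub,
    inv_spectralSum huv (a := 1 - a) ha, spectralSum_mul huv]
  congr 1
  ext α
  simp [div_eq_mul_inv]

end Matrix

theorem div_eq_inv_prod_mul_prod_erase {ι K : Type*} [Fintype ι] [DecidableEq ι] [Field K]
    (f g : ι → K) (hg : ∏ β, g β ≠ 0) (α : ι) :
    f α / g α = (∏ β, g β)⁻¹ * (f α * ∏ β ∈ univ.erase α, g β) := by
  rw [← mul_prod_erase univ g (mem_univ α)] at hg ⊢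
  field_simp [(mul_ne_zero_iff.mp hg).1, (mul_ne_zero_iff.mp hg).2]

theorem cayley_path_spectral_general {N : ℕ} (h U₀ : Matrix (Fin N) (Fin N) ℂ)
    (hval : Fin N → ℝ) (ψ : Fin N → (Fin N → ℂ))
    (hortho : ∀ α β : Fin N, dotProduct (star ∘ ψ α) (ψ β) = if α = β then 1 else 0)
    (hspec : h = ∑ α : Fin N, (hval α : ℂ) • Matrix.vecMulVec (ψ α) (star ∘ ψ α))
    (θ : ℝ)
    (hq : (∏ α : Fin N, (1 - Complex.I * θ * hval α)) ≠ 0) :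
    U₀ * ((1 + Complex.I • ((θ : ℂ) • h)) * (1 - Complex.I • ((θ : ℂ) • h))⁻¹)
      = (∏ α : Fin N, (1 - Complex.I * θ * hval α))⁻¹ •
          ∑ α : Fin N,
            ((1 + Complex.I * θ * hval α) *
              ∏ β ∈ Finset.univ.erase α, (1 - Complex.I * θ * hval β)) •
            (U₀ * Matrix.vecMulVec (ψ α) (star ∘ ψ α)) := by
  have hθh : Complex.I • ((θ : ℂ) • h) =
      spectralSum ψ (fun α => star ∘ ψ α) fun α => Complex.I * θ * hval α := by
    rw [hspec, spectralSum, smul_sum, smul_sum]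
    refine sum_congr rfl fun α _ => ?_
    rw [smul_smul, smul_smul, mul_assoc]
  have hden : ∀ α, 1 - Complex.I * θ * hval α ≠ 0 := fun α h0 =>
    hq (prod_eq_zero (mem_univ α) h0)
  rw [hθh, cayley_spectralSum hortho hden, spectralSum, mul_sum, smul_sum]
  refine sum_congr rfl fun α _ => ?_
  rw [mul_smul_comm, smul_smul,
    div_eq_inv_prod_mul_prod_erase (fun α => 1 + Complex.I * θ * hval α)
      (fun α => 1 - Complex.I * θ * hval α) hq]

/-- Spectral form of the Cayley path: if `h` is Hermitian with eigenvalues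
`hval α` and orthonormal eigenvectors `ψ α`, then for any unitary `U₀` and real
`θ` (with `q θ ≠ 0`),
`U₀ f(θh) = q(θ)⁻¹ • ∑ α, p_α(θ) • U₀ |ψ_α⟩⟨ψ_α|`, where
`q(θ) = ∏ α (1 - iθ h_α)` and `p_α(θ) = (1 + iθ h_α) ∏_{β ≠ α} (1 - iθ h_β)`. -/
theorem cayley_path_spectral {N : ℕ} (h U₀ : Matrix (Fin N) (Fin N) ℂ)
    (hval : Fin N → ℝ) (ψ : Fin N → (Fin N → ℂ))
    (hherm : h.IsHermitian)
    (hU₀ : U₀ ∈ Matrix.unitaryGroup (Fin N) ℂ)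
    (hortho : ∀ α β : Fin N, dotProduct (star ∘ ψ α) (ψ β) = if α = β then 1 else 0)
    (hspec : h = ∑ α : Fin N, (hval α : ℂ) • Matrix.vecMulVec (ψ α) (star ∘ ψ α))
    (θ : ℝ)
    (hq : (∏ α : Fin N, (1 - Complex.I * θ * hval α)) ≠ 0) :
    U₀ * ((1 + Complex.I • ((θ : ℂ) • h)) * (1 - Complex.I • ((θ : ℂ) • h))⁻¹)
      = (∏ α : Fin N, (1 - Complex.I * θ * hval α))⁻¹ •
          ∑ α : Fin N,
            ((1 + Complex.I * θ * hval α) *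
              ∏ β ∈ Finset.univ.erase α, (1 - Complex.I * θ * hval β)) •
            (U₀ * Matrix.vecMulVec (ψ α) (star ∘ ψ α)) :=
  cayley_path_spectral_general h U₀ hval ψ hortho hspec θ hq
end

section
/- Given n distinct evaluation points (θᵢ, fᵢ) and a rational function F of degree (k₁, k₂), if F(θᵢ) = fᵢ for all but at most t indices and n > k₁ + k₂ + 2t, then F is the unique rational function of degree (k₁, k₂) agreeing with at least n - t of the values; i.e., any other rational function G of degree (k₁, k₂) agreeing with at least n - t of the values equals F. -/
/-!
Two rational functions `P/Q` and `P'/Q'` of degree `(k₁, k₂)` that agree at a point where both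
denominators are nonzero make `P Q' - P' Q` vanish there, and that polynomial has degree at most
`k₁ + k₂`. Each of them agrees with the data at `n - t` of the `n` points, so they agree with
each other at `n - 2t > k₁ + k₂` distinct points, forcing `P Q' = P' Q`.
-/

open Polynomial Finset Classical

open scoped Classical

theorem Finset.card_add_card_sub_card_univ_le_card_inter {α : Type*} [Fintype α] [DecidableEq α]
    (s t : Finset α) : #s + #t - Fintype.card α ≤ #(s ∩ t) := by
  have := card_le_univ (s ∪ t)
  rw [card_inter]
  omega

namespace Polynomial

variable {K ι : Type*} [Field K]

theorem mul_eq_mul_of_eval_div_eq_div_of_lt_card {k₁ k₂ : ℕ} {P Q P' Q' : K[X]}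
    (hP : P.natDegree ≤ k₁) (hQ : Q.natDegree ≤ k₂)
    (hP' : P'.natDegree ≤ k₁) (hQ' : Q'.natDegree ≤ k₂)
    (s : Finset ι) {θ : ι → K} (hθ : Set.InjOn θ s)
    (hQne : ∀ i ∈ s, Q.eval (θ i) ≠ 0) (hQ'ne : ∀ i ∈ s, Q'.eval (θ i) ≠ 0)
    (hagree : ∀ i ∈ s, P.eval (θ i) / Q.eval (θ i) = P'.eval (θ i) / Q'.eval (θ i))
    (hcard : k₁ + k₂ < #s) :
    P * Q' = P' * Q := by
  refine eq_of_natDegree_lt_card_of_eval_eq (ι := s) _ _ (f := fun i ↦ θ i)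
    (fun i j hij ↦ Subtype.ext (hθ i.2 j.2 hij)) (fun ⟨i, hi⟩ ↦ ?_) ?_
  · simpa only [eval_mul, div_eq_div_iff (hQne i hi) (hQ'ne i hi)] using hagree i hi
  · rw [Fintype.card_coe]
    exact max_lt ((natDegree_mul_le_of_le hP hQ').trans_lt hcard)
      ((natDegree_mul_le_of_le hP' hQ).trans_lt hcard)

end Polynomial

/-- Berlekamp–Welch uniqueness with errors: given `n > k₁ + k₂ + 2t` distinct
evaluation points `(θᵢ, fᵢ)`, a rational function `F = P/Q` of degree
`(k₁, k₂)` agreeing with at least `n - t` of the values is unique: any other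
rational function `G = P'/Q'` of degree `(k₁, k₂)` agreeing with at least
`n - t` of the values equals `F` (as a rational function, i.e. `P Q' = P' Q`). -/
theorem berlekamp_welch_error_correction {F : Type*} [Field F] (k₁ k₂ t n : ℕ)
    (hn : n > k₁ + k₂ + 2 * t)
    (θ : Fin n → F) (hθ : Function.Injective θ) (f : Fin n → F)
    (P Q P' Q' : Polynomial F)
    (hP : P.natDegree ≤ k₁) (hQ : Q.natDegree ≤ k₂)
    (hP' : P'.natDegree ≤ k₁) (hQ' : Q'.natDegree ≤ k₂)
    (hQne : ∀ i, Q.eval (θ i) ≠ 0) (hQ'ne : ∀ i, Q'.eval (θ i) ≠ 0)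
    (hFagree : n - t ≤ (Finset.univ.filter
      (fun i => P.eval (θ i) / Q.eval (θ i) = f i)).card)
    (hGagree : n - t ≤ (Finset.univ.filter
      (fun i => P'.eval (θ i) / Q'.eval (θ i) = f i)).card) :
    P * Q' = P' * Q := by
  set A := Finset.univ.filter (fun i => P.eval (θ i) / Q.eval (θ i) = f i)
  set B := Finset.univ.filter (fun i => P'.eval (θ i) / Q'.eval (θ i) = f i)
  have hcard : k₁ + k₂ < #(A ∩ B) := by
    have := card_add_card_sub_card_univ_le_card_inter A B
    rw [Fintype.card_fin] at this
    omega
  refine mul_eq_mul_of_eval_div_eq_div_of_lt_card hP hQ hP' hQ' (A ∩ B) hθ.injOn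
    (fun i _ ↦ hQne i) (fun i _ ↦ hQ'ne i) (fun i hi ↦ ?_) hcard
  simp only [A, B, mem_inter, mem_filter] at hi
  rw [hi.1.2, hi.2.2]
end

section
/- Let p be a polynomial of degree d with complex coefficients and suppose |p(z)| ≤ ε for all real z with |z| ≤ Δ, where 0 < Δ ≤ 1. Then |p(-1)| ≤ ε · exp(2d(1 + 1/Δ)). -/
open Polynomial

/-!
Interpolate `p` at the `d + 1` equally spaced nodes `-Δ + 2Δk/d` of `[-Δ, Δ]`. Since the gaps
between nodes are multiples of `2Δ/d`, the `j`-th Lagrange basis polynomial is bounded at `x` by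
`((‖x‖ + Δ) d / (2Δ))^d / (j! (d - j)!)`, and `∑ⱼ 1 / (j! (d - j)!) = 2^d / d!` turns this
into `‖p x‖ ≤ ε ((‖x‖ + Δ) d / Δ)^d / d!`. At `x = -1` the right side is at most
`ε exp (d (1 + 1/Δ))` because `y^d / d! ≤ exp y`.
-/

open Finset
open scoped Nat

namespace Lagrange

variable {𝕜 ι : Type*} [NormedField 𝕜] [DecidableEq ι]

theorem norm_eval_le_mul_sum_norm_eval_basis {s : Finset ι} {v : ι → 𝕜}
    (hvs : Set.InjOn v s) {p : 𝕜[X]} (hp : p.degree < #s) {ε : ℝ}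
    (hε : ∀ i ∈ s, ‖p.eval (v i)‖ ≤ ε) (x : 𝕜) :
    ‖p.eval x‖ ≤ ε * ∑ i ∈ s, ‖(Lagrange.basis s v i).eval x‖ := by
  conv_lhs => rw [eq_interpolate hvs hp]
  rw [interpolate_apply, eval_finsetSum, mul_sum]
  refine (norm_sum_le _ _).trans (sum_le_sum fun i hi => ?_)
  rw [eval_mul, eval_C, norm_mul]
  exact mul_le_mul_of_nonneg_right (hε i hi) (norm_nonneg _)

theorem norm_eval_basis (s : Finset ι) (v : ι → 𝕜) (i : ι) (x : 𝕜) :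
    ‖(Lagrange.basis s v i).eval x‖ = ∏ j ∈ s.erase i, ‖x - v j‖ / ‖v i - v j‖ := by
  simp only [Lagrange.basis, basisDivisor, eval_prod, eval_mul, eval_C, eval_sub, eval_X,
    norm_prod, inv_mul_eq_div, norm_div]

end Lagrange

theorem sum_range_inv_factorial_mul_factorial (d : ℕ) :
    ∑ j ∈ range (d + 1), ((j ! * (d - j)! : ℝ))⁻¹ = 2 ^ d / d ! := by
  rw [← Nat.cast_two, ← Nat.cast_pow, ← Nat.sum_range_choose d, Nat.cast_sum, sum_div]
  refine sum_congr rfl fun j hj => ?_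
  rw [Nat.cast_choose ℝ (Nat.lt_succ_iff.mp (mem_range.mp hj))]
  field_simp

theorem prod_erase_range_abs_sub {d j : ℕ} (hj : j ≤ d) :
    ∏ k ∈ (range (d + 1)).erase j, |(j : ℝ) - k| = j ! * (d - j)! := by
  have hsplit : (range (d + 1)).erase j = range j ∪ Ico (j + 1) (d + 1) := by
    ext k
    simp only [mem_erase, mem_range, mem_union, mem_Ico]
    omega
  have hdisj : Disjoint (range j) (Ico (j + 1) (d + 1)) := by
    simp only [disjoint_left, mem_range, mem_Ico]
    omega
  have hbelow : ∏ k ∈ range j, |(j : ℝ) - k| = j ! := by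
    rw [← Nat.descFactorial_self, Nat.descFactorial_eq_prod_range, Nat.cast_prod]
    refine prod_congr rfl fun k hk => ?_
    have hkj : k ≤ j := (mem_range.mp hk).le
    rw [Nat.cast_sub hkj, abs_of_nonneg (sub_nonneg.mpr (by exact_mod_cast hkj))]
  have habove : ∏ k ∈ Ico (j + 1) (d + 1), |(j : ℝ) - k| = (d - j)! := by
    rw [prod_Ico_eq_prod_range, show d + 1 - (j + 1) = d - j by omega,
      ← prod_range_add_one_eq_factorial, Nat.cast_prod]
    refine prod_congr rfl fun i _ => ?_
    rw [Nat.cast_add, Nat.cast_add, abs_sub_comm, abs_of_nonneg (by push_cast; linarith)]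
    push_cast; ring
  rw [hsplit, prod_union hdisj, hbelow, habove]

/-- For `d = 0` this is the single node `-Δ`, as `k / 0 = 0`. -/
noncomputable def equispacedNode (Δ : ℝ) (d k : ℕ) : ℝ := Δ * (2 * k / d - 1)

section Equispaced

variable {Δ : ℝ} {d : ℕ}

theorem equispacedNode_sub_equispacedNode (Δ : ℝ) (d j k : ℕ) :
    equispacedNode Δ d j - equispacedNode Δ d k = 2 * Δ / d * (j - k) := by
  unfold equispacedNode
  ring

theorem abs_equispacedNode_le (hΔ : 0 ≤ Δ) {k : ℕ} (hk : k ≤ d) :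
    |equispacedNode Δ d k| ≤ Δ := by
  have h0 : 0 ≤ 2 * (k : ℝ) / d := by positivity
  have h2 : 2 * (k : ℝ) / d ≤ 2 :=
    div_le_of_le_mul₀ d.cast_nonneg zero_le_two (by norm_cast; omega)
  unfold equispacedNode
  rw [abs_le]
  constructor <;> nlinarith

theorem injOn_equispacedNode (hΔ : 0 < Δ) : Set.InjOn (equispacedNode Δ d) (range (d + 1)) := by
  intro j hj k hk hjk
  by_contra hne
  have hd : (d : ℝ) ≠ 0 := by
    simp only [coe_range, Set.mem_Iio] at hj hk
    norm_cast
    omega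
  have hsub := equispacedNode_sub_equispacedNode Δ d j k
  rw [hjk, sub_self, eq_comm] at hsub
  exact mul_ne_zero (by positivity) (sub_ne_zero.mpr (by exact_mod_cast hne)) hsub

theorem norm_eval_basis_equispacedNode_le (hΔ : 0 < Δ) {j : ℕ} (hj : j ≤ d) (x : ℂ) :
    ‖(Lagrange.basis (range (d + 1)) (fun k => (equispacedNode Δ d k : ℂ)) j).eval x‖ ≤
      ((‖x‖ + Δ) * d / (2 * Δ)) ^ d / (j ! * (d - j)!) := by
  have hcard : #((range (d + 1)).erase j) = d := by
    rw [card_erase_of_mem (mem_range.mpr (Nat.lt_succ_of_le hj)), card_range]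
    rfl
  rw [Lagrange.norm_eval_basis]
  calc _ ≤ ∏ k ∈ (range (d + 1)).erase j, (‖x‖ + Δ) * d / (2 * Δ) / |(j : ℝ) - k| :=
        prod_le_prod (fun _ _ => by positivity) fun k hk => ?_
    _ = _ := by rw [prod_div_distrib, prod_const, hcard, prod_erase_range_abs_sub hj]
  obtain ⟨hkj, hkd⟩ := mem_erase.mp hk
  have hd : (d : ℝ) ≠ 0 := by
    simp only [mem_range] at hkd
    norm_cast
    omega
  have hjk : |(j : ℝ) - k| ≠ 0 := abs_ne_zero.mpr (sub_ne_zero.mpr (by exact_mod_cast hkj.symm))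
  have hnum : ‖x - equispacedNode Δ d k‖ ≤ ‖x‖ + Δ := by
    refine (norm_sub_le _ _).trans (add_le_add_right ?_ _)
    rw [Complex.norm_real, Real.norm_eq_abs]
    exact abs_equispacedNode_le hΔ.le (Nat.lt_succ_iff.mp (mem_range.mp hkd))
  have hden :
      ‖(equispacedNode Δ d j : ℂ) - equispacedNode Δ d k‖ = 2 * Δ / d * |(j : ℝ) - k| := by
    rw [← Complex.ofReal_sub, Complex.norm_real, Real.norm_eq_abs,
      equispacedNode_sub_equispacedNode, abs_mul, abs_of_nonneg (by positivity)]
  calc ‖x - equispacedNode Δ d k‖ / ‖(equispacedNode Δ d j : ℂ) - equispacedNode Δ d k‖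
      ≤ (‖x‖ + Δ) / (2 * Δ / d * |(j : ℝ) - k|) := by rw [hden]; gcongr
    _ = (‖x‖ + Δ) * d / (2 * Δ) / |(j : ℝ) - k| := by field_simp

theorem sum_norm_eval_basis_equispacedNode_le (hΔ : 0 < Δ) (x : ℂ) :
    ∑ j ∈ range (d + 1),
        ‖(Lagrange.basis (range (d + 1)) (fun k => (equispacedNode Δ d k : ℂ)) j).eval x‖ ≤
      ((‖x‖ + Δ) * d / Δ) ^ d / d ! :=
  calc _ ≤ ∑ j ∈ range (d + 1),
          ((‖x‖ + Δ) * d / (2 * Δ)) ^ d * ((j ! * (d - j)! : ℝ))⁻¹ :=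
        sum_le_sum fun j hj =>
          norm_eval_basis_equispacedNode_le hΔ (Nat.lt_succ_iff.mp (mem_range.mp hj)) x
    _ = ((‖x‖ + Δ) * d / Δ) ^ d / d ! := by
        rw [← mul_sum, sum_range_inv_factorial_mul_factorial, mul_div_assoc', ← mul_pow]
        field_simp

theorem norm_eval_le_of_norm_eval_equispacedNode_le {p : ℂ[X]} (hp : p.natDegree ≤ d)
    (hΔ : 0 < Δ) {ε : ℝ} (hε : ∀ k ≤ d, ‖p.eval (equispacedNode Δ d k : ℂ)‖ ≤ ε)
    (x : ℂ) :
    ‖p.eval x‖ ≤ ε * (((‖x‖ + Δ) * d / Δ) ^ d / d !) := by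
  have hdeg : p.degree < #(range (d + 1)) := by
    rw [card_range]
    exact (degree_le_of_natDegree_le hp).trans_lt (by exact_mod_cast d.lt_succ_self)
  calc ‖p.eval x‖
      ≤ ε * ∑ j ∈ range (d + 1),
          ‖(Lagrange.basis (range (d + 1)) (fun k => (equispacedNode Δ d k : ℂ)) j).eval x‖ :=
        Lagrange.norm_eval_le_mul_sum_norm_eval_basis
          (Complex.ofReal_injective.comp_injOn (injOn_equispacedNode hΔ)) hdeg
          (fun k hk => hε k (Nat.lt_succ_iff.mp (mem_range.mp hk))) x
    _ ≤ ε * (((‖x‖ + Δ) * d / Δ) ^ d / d !) :=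
        mul_le_mul_of_nonneg_left (sum_norm_eval_basis_equispacedNode_le hΔ x)
          ((norm_nonneg _).trans (hε 0 d.zero_le))

end Equispaced

theorem paturi_general (p : Polynomial ℂ) (d : ℕ) (ε Δ : ℝ)
    (hd : p.natDegree ≤ d) (hΔ0 : 0 < Δ)
    (hbound : ∀ z : ℝ, |z| ≤ Δ → ‖p.eval (z : ℂ)‖ ≤ ε) :
    ‖p.eval (-1 : ℂ)‖ ≤ ε * Real.exp (2 * d * (1 + 1 / Δ)) := by
  have hε : 0 ≤ ε := (norm_nonneg _).trans (hbound 0 (by simpa using hΔ0.le))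
  have hinterp := norm_eval_le_of_norm_eval_equispacedNode_le hd hΔ0
    (fun k hk => hbound _ (abs_equispacedNode_le hΔ0.le hk)) (-1)
  rw [norm_neg, norm_one] at hinterp
  refine hinterp.trans (mul_le_mul_of_nonneg_left ?_ hε)
  have harg : (1 + Δ) * d / Δ = d * (1 + 1 / Δ) := by field_simp; ring
  calc ((1 + Δ) * d / Δ) ^ d / d ! ≤ Real.exp ((1 + Δ) * d / Δ) :=
        Real.pow_div_factorial_le_exp _ (by positivity) d
    _ ≤ Real.exp (2 * d * (1 + 1 / Δ)) := by
        rw [harg, Real.exp_le_exp]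
        nlinarith [show (0 : ℝ) ≤ d * (1 + 1 / Δ) by positivity]

/-- Paturi's lemma: if `p` is a polynomial of degree at most `d` with
`|p(z)| ≤ ε` for all real `z` with `|z| ≤ Δ`, `0 < Δ ≤ 1`, then
`|p(-1)| ≤ ε · exp (2d(1 + 1/Δ))`. -/
theorem paturi (p : Polynomial ℂ) (d : ℕ) (ε Δ : ℝ)
    (hd : p.natDegree ≤ d) (hΔ0 : 0 < Δ) (hΔ1 : Δ ≤ 1)
    (hbound : ∀ z : ℝ, |z| ≤ Δ → ‖p.eval (z : ℂ)‖ ≤ ε) :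
    ‖p.eval (-1 : ℂ)‖ ≤ ε * Real.exp (2 * d * (1 + 1 / Δ)) :=
  paturi_general p d ε Δ hd hΔ0 hbound
end

section
/- For θ = 1 + δ with |δ| ≤ Δ ≤ 1/2 and r ∈ (-π, π), the function ν(r) = 2·arctan(θ·tan(r/2)) satisfies |ν(r) - r - δ·sin(r)| ≤ C·δ² for a constant C independent of r and δ. -/
/-!
With `t = tan (r / 2)` we have `r = 2 arctan t` and `sin r = 2t / (1 + t²)`, so the arctangent
subtraction formula gives `ν(r) - r = 2 arctan x` with `x = δt / (1 + (1 + δ)t²)`. Since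
`1 + δ ≥ 1/2`, `|x| ≤ |δ|` and `x` differs from `δt / (1 + t²)` by at most `δ²`, while
`|arctan x - x| ≤ |x|³` by the mean value theorem.
-/

open Real

lemma abs_arctan_sub_self_le (x : ℝ) : |arctan x - x| ≤ |x| ^ 3 := by
  have hderiv : ∀ z ∈ Set.Icc (-|x|) |x|, HasDerivWithinAt (fun u => arctan u - u)
      (1 / (1 + z ^ 2) - 1) (Set.Icc (-|x|) |x|) z :=
    fun z _ => ((hasDerivAt_arctan z).sub (hasDerivAt_id z)).hasDerivWithinAt
  have hbound : ∀ z ∈ Set.Icc (-|x|) |x|, ‖(1 / (1 + z ^ 2) - 1 : ℝ)‖ ≤ x ^ 2 := by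
    intro z hz
    have hz2 : z ^ 2 ≤ |x| ^ 2 := sq_le_sq' hz.1 hz.2
    rw [show (1 / (1 + z ^ 2) - 1 : ℝ) = -(z ^ 2 / (1 + z ^ 2)) by field_simp; ring, norm_neg,
      norm_of_nonneg (by positivity), ← sq_abs x]
    exact (div_le_self (sq_nonneg z) (by nlinarith)).trans hz2
  have h := (convex_Icc _ _).norm_image_sub_le_of_norm_hasDerivWithin_le hderiv hbound
    (x := 0) (y := x) ⟨by simp, by simp⟩ ⟨neg_abs_le x, le_abs_self x⟩
  simpa [pow_succ, sq_abs] using h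

lemma arctan_mul_sub_arctan {θ : ℝ} (hθ : 0 ≤ θ) (t : ℝ) :
    arctan (θ * t) - arctan t = arctan ((θ - 1) * t / (1 + θ * t ^ 2)) := by
  have h := arctan_add (x := θ * t) (y := -t) (by nlinarith [mul_nonneg hθ (sq_nonneg t)])
  rw [arctan_neg] at h
  rw [sub_eq_add_neg, h]
  congr 1
  ring_nf

lemma abs_le_one_add_mul_sq {θ : ℝ} (hθ : 1 / 2 ≤ θ) (t : ℝ) : |t| ≤ 1 + θ * t ^ 2 := by
  nlinarith [sq_nonneg (|t| - 1), sq_abs t]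

lemma abs_pow_three_le_mul_one_add_sq {θ : ℝ} (hθ : 1 / 2 ≤ θ) (t : ℝ) :
    |t| ^ 3 ≤ (1 + θ * t ^ 2) * (1 + t ^ 2) := by
  nlinarith [sq_nonneg (|t| ^ 2 - |t|), sq_abs t, abs_nonneg t, sq_nonneg t,
    mul_le_mul_of_nonneg_right hθ (mul_nonneg (sq_nonneg t) (by positivity : (0:ℝ) ≤ 1 + t ^ 2))]

lemma abs_arctan_one_add_mul_sub_arctan_sub_le {δ : ℝ} (hδ : |δ| ≤ 1 / 2) (t : ℝ) :
    |arctan ((1 + δ) * t) - arctan t - δ * t / (1 + t ^ 2)| ≤ 3 / 2 * δ ^ 2 := by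
  have hθ : 1 / 2 ≤ 1 + δ := by linarith [neg_abs_le δ]
  set D := 1 + (1 + δ) * t ^ 2
  have hD : 0 < D := by positivity
  have ht2 : 0 < 1 + t ^ 2 := by positivity
  set x := δ * t / D with hx
  have hdiff : arctan ((1 + δ) * t) - arctan t = arctan x := by
    rw [arctan_mul_sub_arctan (by linarith) t, add_sub_cancel_left]
  have hx_le : |x| ≤ |δ| := by
    rw [hx, abs_div, abs_of_pos hD, abs_mul, div_le_iff₀ hD]
    exact mul_le_mul_of_nonneg_left (abs_le_one_add_mul_sq hθ t) (abs_nonneg δ)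
  have hcubic : |arctan x - x| ≤ δ ^ 2 / 2 :=
    calc |arctan x - x| ≤ |x| ^ 2 * |x| := by rw [← pow_succ]; exact abs_arctan_sub_self_le x
      _ ≤ |δ| ^ 2 * (1 / 2) := by gcongr; exact hx_le.trans hδ
      _ = δ ^ 2 / 2 := by rw [sq_abs]; ring
  have hlinear : |x - δ * t / (1 + t ^ 2)| ≤ δ ^ 2 := by
    rw [hx, div_sub_div _ _ hD.ne' ht2.ne', abs_div, abs_of_pos (mul_pos hD ht2),
      div_le_iff₀ (mul_pos hD ht2)]
    calc |δ * t * (1 + t ^ 2) - D * (δ * t)| = δ ^ 2 * |t| ^ 3 := by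
          rw [show δ * t * (1 + t ^ 2) - D * (δ * t) = -(δ ^ 2 * t ^ 3) by ring,
            abs_neg, abs_mul, abs_pow, abs_pow, sq_abs]
      _ ≤ δ ^ 2 * (D * (1 + t ^ 2)) := by gcongr; exact abs_pow_three_le_mul_one_add_sq hθ t
  calc _ = |(arctan x - x) + (x - δ * t / (1 + t ^ 2))| := by rw [hdiff]; ring_nf
    _ ≤ 3 / 2 * δ ^ 2 := by linarith [abs_add_le (arctan x - x) (x - δ * t / (1 + t ^ 2))]

/-- First-order expansion of the eigenvalue map near `θ = 1`: there is a
constant `C`, independent of `r` and `δ`, such that for `θ = 1 + δ` with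
`|δ| ≤ Δ ≤ 1/2` and `r ∈ (-π, π)`,
`|2 arctan((1+δ) tan (r/2)) - r - δ sin r| ≤ C δ²`. -/
theorem eigenvalue_map_expansion :
    ∃ C : ℝ, ∀ Δ δ r : ℝ, |δ| ≤ Δ → Δ ≤ 1 / 2 → r ∈ Set.Ioo (-π) π →
      |2 * Real.arctan ((1 + δ) * Real.tan (r / 2)) - r - δ * Real.sin r| ≤ C * δ ^ 2 := by
  refine ⟨3, fun Δ δ r hδΔ hΔ hr => ?_⟩
  set t := tan (r / 2)
  have hr_eq : r = 2 * arctan t := by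
    rw [arctan_tan (by linarith [hr.1]) (by linarith [hr.2])]; ring
  have hsin : sin r = 2 * t / (1 + t ^ 2) := sin_eq_two_mul_tan_half_div_one_add_tan_half_sq r
  have key := abs_arctan_one_add_mul_sub_arctan_sub_le (hδΔ.trans hΔ) t
  calc _ = |2 * (arctan ((1 + δ) * t) - arctan t - δ * t / (1 + t ^ 2))| := by
        rw [hsin]
        nth_rw 1 [hr_eq]
        congr 1
        ring
    _ ≤ 3 * δ ^ 2 := by rw [abs_mul, abs_two]; linarith
end
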